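/- arXiv:2410.00369 — 3 statements merged into one kernel-verified Lean document; each statement's English description precedes it below -/
import Mathlib

section
/- Let M be a bounded open convex subset of ℝ^n (n ≥ 2), σ : ℝ^n × S^{n-1} → ℝ continuous and bounded, λ ∈ ℝ, and let φ : ℝ × ℝ^n × S^{n-1} → ℂ be any function. Define the geometric-optics leading term u(t,x,v) := φ(t − τ_-(x,v), x − τ_-(x,v)v, v) · e^{iλ(t − x·v)} · Θ_σ(x,v). Then for every t ∈ ℝ, x ∈ M and v ∈ S^{n-1}, the map s ↦ u(t+s, x+sv, v) is differentiable at s = 0 with derivative −σ(x,v)·u(t,x,v); i.e., u solves the scattering-free linear transport equation ∂_t u + v·∇u + σu = 0 along characteristics. -/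
open MeasureTheory Metric
open scoped RealInnerProductSpace

/-- Forward exit time of a set `M` from point `x` in direction `v`. -/
noncomputable def exitTime {n : ℕ} (M : Set (EuclideanSpace ℝ (Fin n)))
    (x v : EuclideanSpace ℝ (Fin n)) : ℝ :=
  sSup {s : ℝ | 0 ≤ s ∧ ∀ s' : ℝ, 0 ≤ s' → s' < s → x + s' • v ∈ M}

/-- Backward exit time: `τ₋(x,v) := τ(x,-v)`. -/
noncomputable def backExitTime {n : ℕ} (M : Set (EuclideanSpace ℝ (Fin n)))
    (x v : EuclideanSpace ℝ (Fin n)) : ℝ :=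
  exitTime M x (-v)

/-- `Θ_σ(x,v) := exp(−∫_0^{τ₋(x,v)} σ(x − (τ₋(x,v) − s)v, v) ds)`. -/
noncomputable def Theta {n : ℕ} (M : Set (EuclideanSpace ℝ (Fin n)))
    (σ : EuclideanSpace ℝ (Fin n) → EuclideanSpace ℝ (Fin n) → ℝ)
    (x v : EuclideanSpace ℝ (Fin n)) : ℝ :=
  Real.exp (-(∫ s in (0:ℝ)..(backExitTime M x v),
    σ (x - (backExitTime M x v - s) • v) v))

/-- The geometric-optics leading term
`u(t,x,v) := φ(t − τ₋(x,v), x − τ₋(x,v)v, v) · e^{iλ(t − x·v)} · Θ_σ(x,v)`. -/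
noncomputable def GOLead {n : ℕ} (M : Set (EuclideanSpace ℝ (Fin n)))
    (σ : EuclideanSpace ℝ (Fin n) → EuclideanSpace ℝ (Fin n) → ℝ) (lam : ℝ)
    (φ : ℝ → EuclideanSpace ℝ (Fin n) → EuclideanSpace ℝ (Fin n) → ℂ)
    (t : ℝ) (x v : EuclideanSpace ℝ (Fin n)) : ℂ :=
  φ (t - backExitTime M x v) (x - backExitTime M x v • v) v
    * Complex.exp (Complex.I * (lam : ℂ) * ((t - ⟪x, v⟫ : ℝ) : ℂ))
    * (Theta M σ x v : ℂ)

/-!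
Along the characteristic `s ↦ (t + s, x + s • v)` the backward exit time grows by exactly `s`:
the chord of the convex set `M` through `x` in direction `v` is an interval, and moving the base
point along it translates it. So the footpoint `x - τ₋ v` and the time `t - τ₋` do not change,
and for a unit `v` neither does the phase `t - ⟪x, v⟫`. Hence `u` is a constant multiple of
`Θ_σ(x + s • v, v) = exp (-∫₀^{τ₋(x,v) + s} σ (x - (τ₋(x,v) - r) • v, v) dr)`, whose derivative at
`s = 0` is `-σ(x, v) Θ_σ(x, v)` by the fundamental theorem of calculus.
-/

open Topology

section Chord

variable {E : Type*}

lemma convex_setOf_add_smul_mem [AddCommGroup E] [Module ℝ E] {M : Set E} (hM : Convex ℝ M)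
    (x v : E) : Convex ℝ {r : ℝ | x + r • v ∈ M} := by
  have h : {r : ℝ | x + r • v ∈ M} = AffineMap.lineMap x (x + v) ⁻¹' M := by
    ext r
    simp [AffineMap.lineMap_apply, add_comm]
  exact h ▸ hM.affine_preimage _

lemma bddAbove_setOf_add_smul_mem [NormedAddCommGroup E] [NormedSpace ℝ E] {M : Set E}
    (hM : Bornology.IsBounded M) (x : E) {v : E} (hv : v ≠ 0) :
    BddAbove {r : ℝ | x + r • v ∈ M} := by
  obtain ⟨R, hR⟩ := hM.subset_closedBall x
  refine ⟨R / ‖v‖, fun r hr => ?_⟩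
  have hxr : ‖r • v‖ ≤ R := by simpa [dist_eq_norm] using hR hr
  rw [le_div_iff₀ (norm_pos_iff.2 hv)]
  calc r * ‖v‖ ≤ |r| * ‖v‖ := by gcongr; exact le_abs_self r
    _ = ‖r • v‖ := by rw [norm_smul, Real.norm_eq_abs]
    _ ≤ R := hxr

end Chord

lemma hasDerivAt_exp_neg_integral {g : ℝ → ℝ} (hg : Continuous g) (a b : ℝ) :
    HasDerivAt (fun y => Real.exp (-∫ r in a..y, g r))
      (-g b * Real.exp (-∫ r in a..b, g r)) b := by
  rw [mul_comm]
  exact (hg.integral_hasStrictDerivAt a b).hasDerivAt.neg.exp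

section Characteristics

variable {n : ℕ} {M : Set (EuclideanSpace ℝ (Fin n))} {x v : EuclideanSpace ℝ (Fin n)}

lemma exitTime_eq_of_isLUB (hM : Convex ℝ M) (hx : x ∈ M) {T : ℝ}
    (hT : IsLUB {r : ℝ | x + r • v ∈ M} T) : exitTime M x v = T := by
  have hT0 : 0 ≤ T := hT.1 (by simpa using hx)
  have hmem : T ∈ {s : ℝ | 0 ≤ s ∧ ∀ s' : ℝ, 0 ≤ s' → s' < s → x + s' • v ∈ M} := by
    refine ⟨hT0, fun s' hs'0 hs'T => ?_⟩
    obtain ⟨b, hb, hs'b, -⟩ := hT.exists_between hs'T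
    exact (convex_setOf_add_smul_mem hM x v).ordConnected.out (by simpa using hx) hb
      ⟨hs'0, hs'b.le⟩
  have hub : T ∈ upperBounds
      {s : ℝ | 0 ≤ s ∧ ∀ s' : ℝ, 0 ≤ s' → s' < s → x + s' • v ∈ M} := by
    rintro s ⟨-, hs⟩
    by_contra! hTs
    have := hT.1 (hs ((T + s) / 2) (by linarith) (by linarith))
    linarith
  exact IsGreatest.csSup_eq ⟨hmem, hub⟩

lemma exitTime_add_smul (hMc : Convex ℝ M) (hMb : Bornology.IsBounded M) (hv : v ≠ 0)
    (hx : x ∈ M) {s : ℝ} (hxs : x + s • v ∈ M) :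
    exitTime M (x + s • v) v = exitTime M x v - s := by
  obtain ⟨T, hT⟩ : ∃ T, IsLUB {r : ℝ | x + r • v ∈ M} T :=
    ⟨_, isLUB_csSup ⟨0, by simpa using hx⟩ (bddAbove_setOf_add_smul_mem hMb x hv)⟩
  have hshift : {r : ℝ | x + s • v + r • v ∈ M} = OrderIso.addLeft s ⁻¹' {r | x + r • v ∈ M} := by
    ext r
    simp [add_smul, add_assoc]
  rw [exitTime_eq_of_isLUB hMc hx hT, exitTime_eq_of_isLUB hMc hxs (T := T - s)]
  rw [hshift, OrderIso.isLUB_preimage]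
  simpa using hT

lemma backExitTime_add_smul (hMc : Convex ℝ M) (hMb : Bornology.IsBounded M) (hv : v ≠ 0)
    (hx : x ∈ M) {s : ℝ} (hxs : x + s • v ∈ M) :
    backExitTime M (x + s • v) v = backExitTime M x v + s := by
  have h := exitTime_add_smul hMc hMb (neg_ne_zero.2 hv) hx (s := -s) (by simpa using hxs)
  simp only [neg_smul, smul_neg, neg_neg] at h
  rw [backExitTime, backExitTime, h, sub_neg_eq_add]

lemma eventually_backExitTime_add_smul (hMc : Convex ℝ M) (hMb : Bornology.IsBounded M)
    (hMo : IsOpen M) (hv : v ≠ 0) (hx : x ∈ M) :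
    ∀ᶠ s in 𝓝 (0 : ℝ), backExitTime M (x + s • v) v = backExitTime M x v + s := by
  have hmem : ∀ᶠ s in 𝓝 (0 : ℝ), x + s • v ∈ M :=
    (continuous_const.add (continuous_id.smul continuous_const)).continuousAt.preimage_mem_nhds
      (hMo.mem_nhds (by simpa using hx))
  filter_upwards [hmem] with s hs
  exact backExitTime_add_smul hMc hMb hv hx hs

lemma Theta_add_smul (σ : EuclideanSpace ℝ (Fin n) → EuclideanSpace ℝ (Fin n) → ℝ) {s : ℝ}
    (h : backExitTime M (x + s • v) v = backExitTime M x v + s) :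
    Theta M σ (x + s • v) v = Real.exp (-∫ r in (0 : ℝ)..(backExitTime M x v + s),
      σ (x - (backExitTime M x v - r) • v) v) := by
  rw [Theta, h]
  congr 3 with r
  congr 1
  module

lemma hasDerivAt_Theta_add_smul (hMc : Convex ℝ M) (hMb : Bornology.IsBounded M)
    (hMo : IsOpen M) {σ : EuclideanSpace ℝ (Fin n) → EuclideanSpace ℝ (Fin n) → ℝ}
    (hσc : Continuous fun p : EuclideanSpace ℝ (Fin n) × EuclideanSpace ℝ (Fin n) => σ p.1 p.2)
    (hv : v ≠ 0) (hx : x ∈ M) :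
    HasDerivAt (fun s : ℝ => Theta M σ (x + s • v) v) (-σ x v * Theta M σ x v) 0 := by
  set τ := backExitTime M x v
  set g : ℝ → ℝ := fun r => σ (x - (τ - r) • v) v
  have hg : Continuous g := by
    show Continuous fun r : ℝ => (fun p : EuclideanSpace ℝ (Fin n) × EuclideanSpace ℝ (Fin n) =>
      σ p.1 p.2) (x - (τ - r) • v, v)
    fun_prop
  have hderiv : HasDerivAt (fun s : ℝ => Real.exp (-∫ r in (0 : ℝ)..τ + s, g r))
      (-g τ * Real.exp (-∫ r in (0 : ℝ)..τ, g r)) 0 := by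
    have := (hasDerivAt_exp_neg_integral hg 0 (τ + 0)).comp 0 ((hasDerivAt_id 0).const_add τ)
    simpa [Function.comp_def] using this
  refine (hderiv.congr_of_eventuallyEq ?_).congr_deriv ?_
  · filter_upwards [eventually_backExitTime_add_smul hMc hMb hMo hv hx] with s hs
    exact Theta_add_smul σ hs
  · simp [g, τ, Theta]

lemma GOLead_add_smul (σ : EuclideanSpace ℝ (Fin n) → EuclideanSpace ℝ (Fin n) → ℝ) (lam : ℝ)
    (φ : ℝ → EuclideanSpace ℝ (Fin n) → EuclideanSpace ℝ (Fin n) → ℂ) (t : ℝ) (hv : ‖v‖ = 1)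
    {s : ℝ} (h : backExitTime M (x + s • v) v = backExitTime M x v + s) :
    GOLead M σ lam φ (t + s) (x + s • v) v =
      φ (t - backExitTime M x v) (x - backExitTime M x v • v) v
        * Complex.exp (Complex.I * (lam : ℂ) * ((t - ⟪x, v⟫ : ℝ) : ℂ))
        * (Theta M σ (x + s • v) v : ℂ) := by
  have hinner : ⟪x + s • v, v⟫ = ⟪x, v⟫ + s := by
    rw [inner_add_left, real_inner_smul_left, real_inner_self_eq_norm_sq, hv, one_pow, mul_one]
  have htime : t + s - (backExitTime M x v + s) = t - backExitTime M x v := by ring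
  have hfoot : x + s • v - (backExitTime M x v + s) • v = x - backExitTime M x v • v := by module
  have hphase : t + s - (⟪x, v⟫ + s) = t - ⟪x, v⟫ := by ring
  rw [GOLead, h, hinner, htime, hfoot, hphase]

end Characteristics

theorem stmt_2_general {n : ℕ} (M : Set (EuclideanSpace ℝ (Fin n)))
    (hMb : Bornology.IsBounded M) (hMo : IsOpen M) (hMc : Convex ℝ M)
    (σ : EuclideanSpace ℝ (Fin n) → EuclideanSpace ℝ (Fin n) → ℝ)
    (hσc : Continuous fun p : EuclideanSpace ℝ (Fin n) × EuclideanSpace ℝ (Fin n) => σ p.1 p.2)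
    (lam : ℝ) (φ : ℝ → EuclideanSpace ℝ (Fin n) → EuclideanSpace ℝ (Fin n) → ℂ)
    (t : ℝ) (x : EuclideanSpace ℝ (Fin n)) (hx : x ∈ M)
    (v : EuclideanSpace ℝ (Fin n)) (hv : ‖v‖ = 1) :
    HasDerivAt (fun s : ℝ => GOLead M σ lam φ (t + s) (x + s • v) v)
      (-(σ x v : ℂ) * GOLead M σ lam φ t x v) 0 := by
  have hv0 : v ≠ 0 := norm_ne_zero_iff.1 (by rw [hv]; exact one_ne_zero)
  set A := φ (t - backExitTime M x v) (x - backExitTime M x v • v) v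
    * Complex.exp (Complex.I * (lam : ℂ) * ((t - ⟪x, v⟫ : ℝ) : ℂ))
  have hamplitude : (fun s : ℝ => GOLead M σ lam φ (t + s) (x + s • v) v)
      =ᶠ[𝓝 0] fun s => A * (Theta M σ (x + s • v) v : ℂ) := by
    filter_upwards [eventually_backExitTime_add_smul hMc hMb hMo hv0 hx] with s hs
    exact GOLead_add_smul σ lam φ t hv hs
  refine ((((hasDerivAt_Theta_add_smul hMc hMb hMo hσc hv0 hx).ofReal_comp).const_mul A
    ).congr_of_eventuallyEq hamplitude).congr_deriv ?_
  have hGOLead : GOLead M σ lam φ t x v = A * (Theta M σ x v : ℂ) := rfl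
  rw [hGOLead]
  push_cast
  ring

/-- For `M` a bounded open convex subset of `ℝⁿ` (`n ≥ 2`), `σ` continuous and bounded, `λ ∈ ℝ`,
and any `φ : ℝ × ℝⁿ × S^{n-1} → ℂ`, the geometric-optics leading term `u` solves the
scattering-free linear transport equation `∂ₜu + v·∇u + σu = 0` along characteristics:
for every `t ∈ ℝ`, `x ∈ M` and unit `v`, the map `s ↦ u(t+s, x+sv, v)` is differentiable
at `s = 0` with derivative `−σ(x,v)·u(t,x,v)`. -/
theorem stmt_2 {n : ℕ} (hn : 2 ≤ n) (M : Set (EuclideanSpace ℝ (Fin n)))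
    (hMb : Bornology.IsBounded M) (hMo : IsOpen M) (hMc : Convex ℝ M)
    (σ : EuclideanSpace ℝ (Fin n) → EuclideanSpace ℝ (Fin n) → ℝ)
    (hσc : Continuous fun p : EuclideanSpace ℝ (Fin n) × EuclideanSpace ℝ (Fin n) => σ p.1 p.2)
    (hσb : ∃ C : ℝ, ∀ x v, |σ x v| ≤ C)
    (lam : ℝ) (φ : ℝ → EuclideanSpace ℝ (Fin n) → EuclideanSpace ℝ (Fin n) → ℂ)
    (t : ℝ) (x : EuclideanSpace ℝ (Fin n)) (hx : x ∈ M)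
    (v : EuclideanSpace ℝ (Fin n)) (hv : ‖v‖ = 1) :
    HasDerivAt (fun s : ℝ => GOLead M σ lam φ (t + s) (x + s • v) v)
      (-(σ x v : ℂ) * GOLead M σ lam φ t x v) 0 :=
  stmt_2_general M hMb hMo hMc σ hσc lam φ t x hx v hv
end

section
/- Let n ≥ 2 and fix x ∈ ℝ^n with x ≠ 0. For every Φ ∈ L²(S^{n-1}; ℂ), the oscillatory integral ∫_{S^{n-1}} e^{−iλ x·v} Φ(v) dσ(v) tends to 0 as λ → +∞ and as λ → −∞; i.e., the family v ↦ e^{−iλ x·v} converges weakly to 0 in L²(S^{n-1}). -/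
open MeasureTheory Metric Filter
open scoped RealInnerProductSpace

/-- The standard surface measure on the unit sphere `S^{n-1} ⊆ ℝⁿ`. -/
noncomputable def sphereMeasure (n : ℕ) :
    Measure (sphere (0 : EuclideanSpace ℝ (Fin n)) 1) :=
  (volume : Measure (EuclideanSpace ℝ (Fin n))).toSphere

/-!
For `n ≥ 2` and `x ≠ 0` the image of `σ` under `v ↦ ⟪x, v⟫` is absolutely continuous with
respect to Lebesgue measure. Indeed, after rotating `x` onto the first axis, the cone
`{y | ⟪x, y⟫ / ‖y‖ ∈ s}` over a null set `s` meets every line parallel to that axis (away from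
the axis itself) in the preimage of a rescaled `s` under the diffeomorphism
`t ↦ t / √(t² + b)` of `ℝ` onto `(-1, 1)`, so it is null by Fubini; and `σ` is the cone measure
of the unit ball. Consequently, for `f ≥ 0` integrable, `∫ e^{-iλ⟪x,v⟫} f(v) dσ(v)` is the
Fourier transform of an integrable density on `ℝ` and tends to `0` by the Riemann–Lebesgue
lemma. A general `Φ ∈ L² ⊆ L¹` is a linear combination of four such `f`.
-/

open Complex Set Topology

noncomputable def oscillatoryIntegral {X : Type*} [MeasurableSpace X] (μ : Measure X)
    (g : X → ℝ) (Φ : X → ℂ) (w : ℝ) : ℂ :=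
  ∫ v, exp (-(I * w * g v)) * Φ v ∂μ

theorem tendsto_integral_exp_cocompact_of_absolutelyContinuous (ν : Measure ℝ) [SigmaFinite ν]
    (hν : ν ≪ volume) :
    Tendsto (fun w : ℝ => ∫ t, exp (-(I * w * t)) ∂ν) (cocompact ℝ) (𝓝 0) := by
  -- `Real.tendsto_integral_exp_smul_cocompact` is stated with `𝐞 (-(t * w)) = exp (-2πitw)`.
  set H : ℝ → ℂ := fun t => ((ν.rnDeriv volume t).toReal : ℂ)
  have hscale : Tendsto (fun w : ℝ => w / (2 * Real.pi)) (cocompact ℝ) (cocompact ℝ) :=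
    (Homeomorph.mulRight₀ (2 * Real.pi)⁻¹ (by positivity)).map_cocompact.le
  convert (Real.tendsto_integral_exp_smul_cocompact H).comp hscale using 2 with w
  rw [Function.comp_apply, ← integral_rnDeriv_smul hν]
  refine integral_congr_ae (Eventually.of_forall fun t => ?_)
  simp only [H, Circle.smul_def, Real.fourierChar_apply, smul_eq_mul, real_smul]
  rw [mul_comm]
  congr 2
  push_cast
  field_simp

section OscillatoryIntegral

variable {X : Type*} [MeasurableSpace X] {μ : Measure X} {g : X → ℝ}

theorem integrable_exp_mul (hg : Measurable g) {Φ : X → ℂ} (hΦ : Integrable Φ μ) (w : ℝ) :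
    Integrable (fun v => exp (-(I * w * g v)) * Φ v) μ := by
  refine hΦ.bdd_mul (c := 1) (by fun_prop) (Eventually.of_forall fun v => ?_)
  rw [norm_exp]
  simp

theorem oscillatoryIntegral_mul_add_mul (hg : Measurable g) {Φ Ψ : X → ℂ}
    (hΦ : Integrable Φ μ) (hΨ : Integrable Ψ μ) (a b : ℂ) :
    oscillatoryIntegral μ g (fun v => a * Φ v + b * Ψ v) =
      a • oscillatoryIntegral μ g Φ + b • oscillatoryIntegral μ g Ψ := by
  ext w
  simp only [oscillatoryIntegral, Pi.add_apply, Pi.smul_apply, smul_eq_mul, mul_add,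
    mul_left_comm _ a, mul_left_comm _ b]
  rw [integral_add ((integrable_exp_mul hg hΦ w).const_mul a)
    ((integrable_exp_mul hg hΨ w).const_mul b), integral_const_mul, integral_const_mul]

theorem tendsto_oscillatoryIntegral_mul_add_mul (hg : Measurable g) {Φ Ψ : X → ℂ}
    (hΦ : Integrable Φ μ) (hΨ : Integrable Ψ μ) (a b : ℂ)
    (hΦ₀ : Tendsto (oscillatoryIntegral μ g Φ) (cocompact ℝ) (𝓝 0))
    (hΨ₀ : Tendsto (oscillatoryIntegral μ g Ψ) (cocompact ℝ) (𝓝 0)) :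
    Tendsto (oscillatoryIntegral μ g (fun v => a * Φ v + b * Ψ v)) (cocompact ℝ) (𝓝 0) := by
  rw [oscillatoryIntegral_mul_add_mul hg hΦ hΨ]
  have h := (hΦ₀.const_smul a).add (hΨ₀.const_smul b)
  rwa [smul_zero, smul_zero, add_zero] at h

theorem tendsto_oscillatoryIntegral_of_nonneg (hg : Measurable g) (hμg : μ.map g ≪ volume)
    {f : X → ℝ} (hf : Integrable f μ) (hf₀ : 0 ≤ᵐ[μ] f) :
    Tendsto (oscillatoryIntegral μ g (fun v => f v)) (cocompact ℝ) (𝓝 0) := by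
  set μf := μ.withDensity fun v => ENNReal.ofReal (f v)
  have : IsFiniteMeasure μf := isFiniteMeasure_withDensity_ofReal hf.2
  have hac : μf.map g ≪ volume := ((withDensity_absolutelyContinuous μ _).map hg).trans hμg
  convert tendsto_integral_exp_cocompact_of_absolutelyContinuous _ hac using 2 with w
  rw [integral_map hg.aemeasurable (by fun_prop), integral_withDensity_eq_integral_toReal_smul₀
    hf.1.aemeasurable.ennreal_ofReal (Eventually.of_forall fun _ => ENNReal.ofReal_lt_top)]
  refine integral_congr_ae (hf₀.mono fun v hv => ?_)
  simp [ENNReal.toReal_ofReal hv, mul_comm]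

theorem tendsto_oscillatoryIntegral_of_real (hg : Measurable g) (hμg : μ.map g ≪ volume)
    {f : X → ℝ} (hf : Integrable f μ) :
    Tendsto (oscillatoryIntegral μ g (fun v => f v)) (cocompact ℝ) (𝓝 0) := by
  have hsplit : (fun v => (f v : ℂ)) =
      fun v => 1 * ((max (f v) 0 : ℝ) : ℂ) + -1 * ((max (-f v) 0 : ℝ) : ℂ) := by
    ext v
    rw [one_mul, neg_one_mul, ← sub_eq_add_neg]
    exact_mod_cast (max_zero_sub_max_neg_zero_eq_self (f v)).symm
  rw [hsplit]
  exact tendsto_oscillatoryIntegral_mul_add_mul hg hf.pos_part.ofReal hf.neg_part.ofReal _ _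
    (tendsto_oscillatoryIntegral_of_nonneg hg hμg hf.pos_part
      (Eventually.of_forall fun _ => le_max_right _ _))
    (tendsto_oscillatoryIntegral_of_nonneg hg hμg hf.neg_part
      (Eventually.of_forall fun _ => le_max_right _ _))

theorem tendsto_oscillatoryIntegral (hg : Measurable g) (hμg : μ.map g ≪ volume)
    {Φ : X → ℂ} (hΦ : Integrable Φ μ) :
    Tendsto (oscillatoryIntegral μ g Φ) (cocompact ℝ) (𝓝 0) := by
  have hsplit : Φ = fun v => 1 * ((Φ v).re : ℂ) + I * ((Φ v).im : ℂ) := by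
    ext v
    rw [one_mul, mul_comm, re_add_im]
  rw [hsplit]
  exact tendsto_oscillatoryIntegral_mul_add_mul hg hΦ.re.ofReal hΦ.im.ofReal _ _
    (tendsto_oscillatoryIntegral_of_real hg hμg hΦ.re)
    (tendsto_oscillatoryIntegral_of_real hg hμg hΦ.im)

end OscillatoryIntegral

theorem volume_setOf_div_sqrt_sq_add_mem_eq_zero {b : ℝ} (hb : 0 < b) {s : Set ℝ}
    (hs : volume s = 0) : volume {t : ℝ | t / √(t ^ 2 + b) ∈ s} = 0 := by
  -- `ψ` inverts `t ↦ t / √(t ^ 2 + b)`, and differentiable maps send null sets to null sets.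
  set ψ : ℝ → ℝ := fun r => √b * r / √(1 - r ^ 2)
  have hψ : DifferentiableOn ℝ ψ (Ioo (-1) 1) := by
    intro r ⟨h₁, h₂⟩
    have h : 0 < 1 - r ^ 2 := by nlinarith
    have h' : √(1 - r ^ 2) ≠ 0 := (Real.sqrt_pos.2 h).ne'
    have h'' : 1 - r ^ 2 ≠ 0 := h.ne'
    exact (by fun_prop (disch := assumption) :
      DifferentiableAt ℝ (fun r : ℝ => √b * r / √(1 - r ^ 2)) r).differentiableWithinAt
  refine measure_mono_null (fun t (ht : t / √(t ^ 2 + b) ∈ s) => ?_)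
    (addHaar_image_eq_zero_of_differentiableOn_of_addHaar_eq_zero volume
      (hψ.mono inter_subset_right) (measure_mono_null inter_subset_left hs))
  have hpos : 0 < √(t ^ 2 + b) := Real.sqrt_pos.2 (by positivity)
  have hlt : |t| < √(t ^ 2 + b) := by
    rw [← Real.sqrt_sq_eq_abs]; exact Real.sqrt_lt_sqrt (sq_nonneg t) (by linarith)
  refine ⟨t / √(t ^ 2 + b), ⟨ht, ?_⟩, ?_⟩
  · rw [mem_Ioo, ← abs_lt, abs_div, abs_of_pos hpos]
    exact (div_lt_one hpos).2 hlt
  · have h1 : 1 - (t / √(t ^ 2 + b)) ^ 2 = (√b / √(t ^ 2 + b)) ^ 2 := by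
      rw [div_pow, div_pow, Real.sq_sqrt (by positivity), Real.sq_sqrt hb.le]; field_simp; ring
    simp only [ψ]
    rw [h1, Real.sqrt_sq (div_pos (Real.sqrt_pos.2 hb) hpos).le]
    field_simp

theorem volume_setOf_div_sqrt_sum_sq_mem_eq_zero {m : ℕ} (hm : 0 < m) {s : Set ℝ}
    (hs : MeasurableSet s) (h0 : volume s = 0) :
    volume {y : Fin (m + 1) → ℝ | y 0 / √(∑ i, y i ^ 2) ∈ s} = 0 := by
  have : Nonempty (Fin m) := ⟨⟨0, hm⟩⟩
  set T : Set (ℝ × (Fin m → ℝ)) := {p | p.1 / √(p.1 ^ 2 + ∑ i, p.2 i ^ 2) ∈ s}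
  have hT : MeasurableSet T := by
    refine Measurable.div measurable_fst ?_ hs
    fun_prop
  have hpre : {y : Fin (m + 1) → ℝ | y 0 / √(∑ i, y i ^ 2) ∈ s} =
      MeasurableEquiv.piFinSuccAbove (fun _ => ℝ) 0 ⁻¹' T := by
    ext y
    simp only [T, mem_preimage, Fin.sum_univ_succAbove _ 0]
    rfl
  rw [hpre, (volume_preserving_piFinSuccAbove (fun _ => ℝ) 0).measure_preimage
    hT.nullMeasurableSet, Measure.volume_eq_prod, Measure.prod_apply_symm hT]
  refine lintegral_eq_zero_of_ae_eq_zero ?_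
  filter_upwards [compl_mem_ae_iff.2 (measure_singleton (0 : Fin m → ℝ))] with z hz
  have hb : 0 < ∑ i, z i ^ 2 := by
    obtain ⟨i, hi⟩ := Function.ne_iff.1 hz
    exact Finset.sum_pos' (fun j _ => sq_nonneg (z j))
      ⟨i, Finset.mem_univ i, sq_pos_of_ne_zero hi⟩
  exact volume_setOf_div_sqrt_sq_add_mem_eq_zero hb h0

theorem volume_setOf_inner_div_norm_mem_eq_zero {n : ℕ} (hn : 2 ≤ n)
    {x : EuclideanSpace ℝ (Fin n)} (hx : x ≠ 0) {s : Set ℝ} (hs : MeasurableSet s)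
    (h0 : volume s = 0) :
    volume {y : EuclideanSpace ℝ (Fin n) | ⟪x, y⟫ / ‖y‖ ∈ s} = 0 := by
  obtain ⟨m, rfl⟩ : ∃ m, n = m + 1 := ⟨n - 1, by omega⟩
  have hxpos : 0 < ‖x‖ := norm_pos_iff.2 hx
  set w : EuclideanSpace ℝ (Fin (m + 1)) := EuclideanSpace.single 0 ‖x‖
  set e := (ℝ ∙ (w - x))ᗮ.reflection
  have hew : e w = x := Submodule.reflection_sub (by simp [w])
  have hinner : ∀ y, ⟪x, e y⟫ = ‖x‖ * y 0 := fun y => by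
    conv_lhs => rw [← hew]
    rw [e.inner_map_map, EuclideanSpace.inner_single_left]
    simp
  have hnorm : ∀ y : EuclideanSpace ℝ (Fin (m + 1)), ‖y‖ = √(∑ i, y i ^ 2) := fun y => by
    simp [EuclideanSpace.norm_eq]
  have hpre : e ⁻¹' {y | ⟪x, y⟫ / ‖y‖ ∈ s} = (MeasurableEquiv.toLp 2 (Fin (m + 1) → ℝ)).symm ⁻¹'
      {y : Fin (m + 1) → ℝ | y 0 / √(∑ i, y i ^ 2) ∈ (‖x‖ * ·) ⁻¹' s} := by
    ext y
    change ⟪x, e y⟫ / ‖e y‖ ∈ s ↔ ‖x‖ * (y 0 / √(∑ i, y i ^ 2)) ∈ s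
    rw [hinner, e.norm_map, hnorm y, mul_div_assoc]
  rw [← MeasurePreserving.measure_preimage_equiv (f := e.toMeasurableEquiv) e.measurePreserving,
    LinearIsometryEquiv.coe_toMeasurableEquiv, hpre,
    (EuclideanSpace.volume_preserving_symm_measurableEquiv_toLp _).measure_preimage_equiv]
  refine volume_setOf_div_sqrt_sum_sq_mem_eq_zero (by omega) ((measurable_const_mul _) hs) ?_
  rw [Real.volume_preimage_mul_left hxpos.ne', h0, mul_zero]

instance isFiniteMeasure_sphereMeasure (n : ℕ) : IsFiniteMeasure (sphereMeasure n) := by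
  unfold sphereMeasure; infer_instance

theorem absolutelyContinuous_map_inner_sphereMeasure {n : ℕ} (hn : 2 ≤ n)
    {x : EuclideanSpace ℝ (Fin n)} (hx : x ≠ 0) :
    (sphereMeasure n).map
      (fun v : sphere (0 : EuclideanSpace ℝ (Fin n)) 1 => ⟪x, (v : EuclideanSpace ℝ (Fin n))⟫) ≪
      volume := by
  have hg : Measurable fun v : sphere (0 : EuclideanSpace ℝ (Fin n)) 1 => ⟪x, (v : _)⟫ := by
    fun_prop
  refine Measure.AbsolutelyContinuous.mk fun s hs h0 => ?_
  rw [Measure.map_apply hg hs, sphereMeasure, Measure.toSphere_apply' _ (hg hs)]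
  refine mul_eq_zero_of_right _
    (measure_mono_null ?_ (volume_setOf_inner_div_norm_mem_eq_zero hn hx hs h0))
  rintro _ ⟨r, hr, _, ⟨v, hv, rfl⟩, rfl⟩
  have hv1 : ‖(v : EuclideanSpace ℝ (Fin n))‖ = 1 := by simp
  change ⟪x, r • (v : _)⟫ / ‖r • (v : EuclideanSpace ℝ (Fin n))‖ ∈ s
  rwa [real_inner_smul_right, norm_smul, hv1, Real.norm_of_nonneg hr.1.le, mul_one,
    mul_div_cancel_left₀ _ hr.1.ne']

/-- Let `n ≥ 2` and fix `x ∈ ℝⁿ`, `x ≠ 0`.  For every `Φ ∈ L²(S^{n-1}; ℂ)`, the oscillatory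
integral `∫_{S^{n-1}} e^{−iλ x·v} Φ(v) dσ(v)` tends to `0` as `λ → +∞` and as `λ → −∞`;
i.e. `v ↦ e^{−iλ x·v}` converges weakly to `0` in `L²(S^{n-1})`. -/
theorem stmt_4 {n : ℕ} (hn : 2 ≤ n) (x : EuclideanSpace ℝ (Fin n)) (hx : x ≠ 0)
    (Φ : sphere (0 : EuclideanSpace ℝ (Fin n)) 1 → ℂ)
    (hΦ : MemLp Φ 2 (sphereMeasure n)) :
    Tendsto (fun lam : ℝ => ∫ v, Complex.exp (-(Complex.I * (lam : ℂ) *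
        ((⟪x, (v : EuclideanSpace ℝ (Fin n))⟫ : ℝ) : ℂ))) * Φ v ∂(sphereMeasure n))
      atTop (nhds 0) ∧
    Tendsto (fun lam : ℝ => ∫ v, Complex.exp (-(Complex.I * (lam : ℂ) *
        ((⟪x, (v : EuclideanSpace ℝ (Fin n))⟫ : ℝ) : ℂ))) * Φ v ∂(sphereMeasure n))
      atBot (nhds 0) := by
  have h := tendsto_oscillatoryIntegral (by fun_prop)
    (absolutelyContinuous_map_inner_sphereMeasure hn hx) (hΦ.integrable one_le_two)
  exact ⟨h.mono_left atTop_le_cocompact, h.mono_left atBot_le_cocompact⟩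
end

section
/- Let M be a bounded open convex subset of ℝ^n (n ≥ 2), T > 0, σ : cl(M) × S^{n-1} → ℝ continuous and bounded, and let S ∈ L^∞(ℝ × M) vanish for t outside (0,T). Define F̃(t,x,v) := ∫_0^{τ(x,v)} exp(−∫_0^s σ(x+rv, v) dr) · S(t−s, x+sv) ds for (t,x,v) ∈ ℝ × cl(M) × S^{n-1}. Then: (i) F̃(t,x,v) = 0 whenever t ≤ 0; (ii) for every t' > τ(x,v), F̃(T+t', x, v) = 0; and (iii) for every 0 < t' ≤ τ(x,v), F̃(T+t', x, v) = exp(−∫_0^{t'} σ(x+uv, v) du) · F̃(T, x+t'v, v). -/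
open MeasureTheory Metric

/-- The attenuated light ray transform of the source `S` along forward chords:
`F̃(t,x,v) := ∫_0^{τ(x,v)} exp(−∫_0^s σ(x+rv, v) dr) · S(t−s, x+sv) ds`. -/
noncomputable def Ftil {n : ℕ} (M : Set (EuclideanSpace ℝ (Fin n)))
    (σ : EuclideanSpace ℝ (Fin n) → EuclideanSpace ℝ (Fin n) → ℝ)
    (S : ℝ → EuclideanSpace ℝ (Fin n) → ℂ)
    (t : ℝ) (x v : EuclideanSpace ℝ (Fin n)) : ℂ :=
  ∫ s in (0:ℝ)..(exitTime M x v),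
    (Real.exp (-(∫ r in (0:ℝ)..s, σ (x + r • v) v)) : ℂ) * S (t - s) (x + s • v)

/-!
Parts (i) and (ii) hold because along the chord the source is only sampled at times
`t - s`, `s ∈ (0, τ(x,v)]`, which lie outside `(0, T)`. For (iii), the integrand of
`F̃(T + t', x, v)` vanishes for `s ∈ (0, t']`; substituting `s = t' + u` in the rest, the
attenuation splits as `∫_0^{t'+u} = ∫_0^{t'} + ∫_{t'}^{t'+u}`, and the exit time from
`x + t'v` is `τ(x,v) - t'`.
-/

open Set

section ExitTime

variable {n : ℕ} {M : Set (EuclideanSpace ℝ (Fin n))} {x v : EuclideanSpace ℝ (Fin n)}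

def exitSet (M : Set (EuclideanSpace ℝ (Fin n))) (x v : EuclideanSpace ℝ (Fin n)) : Set ℝ :=
  {s : ℝ | 0 ≤ s ∧ ∀ s' : ℝ, 0 ≤ s' → s' < s → x + s' • v ∈ M}

lemma exitTime_eq_sSup_exitSet : exitTime M x v = sSup (exitSet M x v) := rfl

lemma zero_mem_exitSet : (0 : ℝ) ∈ exitSet M x v :=
  ⟨le_rfl, fun _ h0 h => absurd (h0.trans_lt h) (lt_irrefl 0)⟩

lemma exitTime_nonneg : 0 ≤ exitTime M x v :=
  Real.sSup_nonneg fun _ hs => hs.1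

lemma add_smul_mem_of_lt_exitTime {s : ℝ} (hs0 : 0 ≤ s) (hs : s < exitTime M x v) :
    x + s • v ∈ M := by
  obtain ⟨a, ha, hsa⟩ := exists_lt_of_lt_csSup ⟨0, zero_mem_exitSet⟩ hs
  exact ha.2 s hs0 hsa

lemma add_mem_exitSet_of_mem_exitSet_add_smul {a s : ℝ} (ha0 : 0 ≤ a)
    (ha : a ≤ exitTime M x v) (hs : s ∈ exitSet M (x + a • v) v) :
    a + s ∈ exitSet M x v := by
  refine ⟨add_nonneg ha0 hs.1, fun u hu0 hu => ?_⟩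
  rcases lt_or_ge u a with hua | hau
  · exact add_smul_mem_of_lt_exitTime hu0 (hua.trans_le ha)
  · simpa [add_assoc, ← add_smul] using hs.2 (u - a) (sub_nonneg.2 hau) (by linarith)

lemma exitTime_add_smul_s16 {a : ℝ} (ha0 : 0 ≤ a) (ha : a ≤ exitTime M x v) :
    exitTime M (x + a • v) v = exitTime M x v - a := by
  rcases ha0.eq_or_lt with rfl | ha0'
  · simp
  -- `sSup` of an unbounded set of reals is the junk value `0`, which `0 < a ≤ τ` excludes.
  have hbdd : BddAbove (exitSet M x v) := by
    by_contra h
    rw [exitTime_eq_sSup_exitSet, Real.sSup_of_not_bddAbove h] at ha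
    linarith
  have hbound : ∀ s ∈ exitSet M (x + a • v) v, s ≤ exitTime M x v - a := fun s hs =>
    le_sub_iff_add_le'.2 (le_csSup hbdd (add_mem_exitSet_of_mem_exitSet_add_smul ha0 ha hs))
  refine le_antisymm (csSup_le ⟨0, zero_mem_exitSet⟩ hbound) (le_csSup ⟨_, hbound⟩ ?_)
  refine ⟨sub_nonneg.2 ha, fun s hs0 hs => ?_⟩
  rw [add_assoc, ← add_smul]
  exact add_smul_mem_of_lt_exitTime (by linarith) (by linarith)

end ExitTime

lemma intervalIntegral_eq_of_eqOn_Ioc_zero {E : Type*} [NormedAddCommGroup E] [NormedSpace ℝ E]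
    {f : ℝ → E} {a b c : ℝ} (hab : a ≤ b) (hbc : b ≤ c) (hf : ∀ s ∈ Ioc a b, f s = 0) :
    ∫ s in a..c, f s = ∫ s in b..c, f s := by
  rw [intervalIntegral.integral_of_le (hab.trans hbc), intervalIntegral.integral_of_le hbc]
  refine setIntegral_eq_of_subset_of_forall_sdiff_eq_zero measurableSet_Ioc
    (Ioc_subset_Ioc_left hab) fun s hs => hf s ⟨hs.1.1, ?_⟩
  by_contra h
  exact hs.2 ⟨not_le.1 h, hs.1.2⟩

lemma intervalIntegral_zero_add {g : ℝ → ℝ} (hg : Continuous g) (a u : ℝ) :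
    ∫ r in (0 : ℝ)..(a + u), g r = (∫ r in (0 : ℝ)..a, g r) + ∫ r in (0 : ℝ)..u, g (a + r) := by
  rw [← intervalIntegral.integral_add_adjacent_intervals (hg.intervalIntegrable 0 a)
    (hg.intervalIntegrable a (a + u)), intervalIntegral.integral_comp_add_left, add_zero]

section Ftil

variable {n : ℕ} {M : Set (EuclideanSpace ℝ (Fin n))}
  {σ : EuclideanSpace ℝ (Fin n) → EuclideanSpace ℝ (Fin n) → ℝ}
  {S : ℝ → EuclideanSpace ℝ (Fin n) → ℂ} {t : ℝ} {x v : EuclideanSpace ℝ (Fin n)}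

lemma Ftil_eq_zero (hS : ∀ s ∈ Ioc 0 (exitTime M x v), S (t - s) (x + s • v) = 0) :
    Ftil M σ S t x v = 0 := by
  rw [Ftil, intervalIntegral_eq_of_eqOn_Ioc_zero exitTime_nonneg le_rfl
    fun s hs => by rw [hS s hs, mul_zero], intervalIntegral.integral_same]

lemma Ftil_eq_exp_mul_Ftil_add_smul (hσ : Continuous fun r : ℝ => σ (x + r • v) v) {a : ℝ}
    (ha0 : 0 ≤ a) (ha : a ≤ exitTime M x v) (hS : ∀ s ∈ Ioc 0 a, S (t - s) (x + s • v) = 0) :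
    Ftil M σ S t x v =
      (Real.exp (-(∫ r in (0 : ℝ)..a, σ (x + r • v) v)) : ℂ) *
        Ftil M σ S (t - a) (x + a • v) v := by
  have hshift : ∀ u : ℝ, x + (a + u) • v = x + a • v + u • v := fun u => by
    rw [add_smul, add_assoc]
  have hcv := intervalIntegral.integral_comp_add_left (a := 0) (b := exitTime M x v - a)
    (fun s => (Real.exp (-(∫ r in (0 : ℝ)..s, σ (x + r • v) v)) : ℂ) * S (t - s) (x + s • v)) a
  rw [add_zero, add_sub_cancel] at hcv
  rw [Ftil, intervalIntegral_eq_of_eqOn_Ioc_zero ha0 ha fun s hs => by rw [hS s hs, mul_zero],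
    ← hcv, Ftil, exitTime_add_smul_s16 ha0 ha, ← intervalIntegral.integral_const_mul]
  refine intervalIntegral.integral_congr fun u _ => ?_
  simp only [intervalIntegral_zero_add hσ, hshift, neg_add, Real.exp_add, Complex.ofReal_mul,
    sub_add_eq_sub_sub, mul_assoc]

end Ftil

theorem stmt_16_general {n : ℕ} (M : Set (EuclideanSpace ℝ (Fin n)))
    (T : ℝ)
    (σ : EuclideanSpace ℝ (Fin n) → EuclideanSpace ℝ (Fin n) → ℝ)
    (hσc : Continuous fun p : EuclideanSpace ℝ (Fin n) × EuclideanSpace ℝ (Fin n) => σ p.1 p.2)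
    (S : ℝ → EuclideanSpace ℝ (Fin n) → ℂ)
    (hSsupp : ∀ t : ℝ, t ∉ Set.Ioo 0 T → ∀ x, S t x = 0)
    (x : EuclideanSpace ℝ (Fin n))
    (v : EuclideanSpace ℝ (Fin n)) :
    (∀ t : ℝ, t ≤ 0 → Ftil M σ S t x v = 0) ∧
    (∀ t' : ℝ, exitTime M x v < t' → Ftil M σ S (T + t') x v = 0) ∧
    (∀ t' : ℝ, 0 < t' → t' ≤ exitTime M x v →
      Ftil M σ S (T + t') x v
        = (Real.exp (-(∫ u in (0:ℝ)..t', σ (x + u • v) v)) : ℂ) *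
            Ftil M σ S T (x + t' • v) v) := by
  refine ⟨fun t ht => Ftil_eq_zero fun s hs => hSsupp _ (fun h => ?_) _,
    fun t' ht' => Ftil_eq_zero fun s hs => hSsupp _ (fun h => ?_) _,
    fun t' ht'0 ht' => ?_⟩
  · linarith [h.1, hs.1]
  · linarith [h.2, hs.2]
  · have hσ : Continuous fun r : ℝ => σ (x + r • v) v :=
      hσc.comp ((by fun_prop : Continuous fun r : ℝ => x + r • v).prodMk continuous_const)
    rw [Ftil_eq_exp_mul_Ftil_add_smul hσ ht'0.le ht' fun s hs => hSsupp _ (fun h => ?_) _,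
      add_sub_cancel_right]
    linarith [h.2, hs.2]

/-- For `M ⊆ ℝⁿ` bounded open convex (`n ≥ 2`), `T > 0`, `σ` continuous and bounded, and
`S ∈ L^∞(ℝ × M)` vanishing for `t ∉ (0,T)`:
(i) `F̃(t,x,v) = 0` whenever `t ≤ 0`;
(ii) for every `t' > τ(x,v)`, `F̃(T+t',x,v) = 0`;
(iii) for every `0 < t' ≤ τ(x,v)`,
`F̃(T+t',x,v) = exp(−∫_0^{t'} σ(x+uv, v) du) · F̃(T, x+t'v, v)`. -/
theorem stmt_16 {n : ℕ} (hn : 2 ≤ n) (M : Set (EuclideanSpace ℝ (Fin n)))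
    (hMb : Bornology.IsBounded M) (hMo : IsOpen M) (hMc : Convex ℝ M)
    (T : ℝ) (hT : 0 < T)
    (σ : EuclideanSpace ℝ (Fin n) → EuclideanSpace ℝ (Fin n) → ℝ)
    (hσc : Continuous fun p : EuclideanSpace ℝ (Fin n) × EuclideanSpace ℝ (Fin n) => σ p.1 p.2)
    (hσb : ∃ C : ℝ, ∀ x v, |σ x v| ≤ C)
    (S : ℝ → EuclideanSpace ℝ (Fin n) → ℂ)
    (hSm : Measurable fun p : ℝ × EuclideanSpace ℝ (Fin n) => S p.1 p.2)
    (hSb : ∃ C : ℝ, ∀ t x, ‖S t x‖ ≤ C)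
    (hSsupp : ∀ t : ℝ, t ∉ Set.Ioo 0 T → ∀ x, S t x = 0)
    (x : EuclideanSpace ℝ (Fin n)) (hx : x ∈ closure M)
    (v : EuclideanSpace ℝ (Fin n)) (hv : ‖v‖ = 1) :
    (∀ t : ℝ, t ≤ 0 → Ftil M σ S t x v = 0) ∧
    (∀ t' : ℝ, exitTime M x v < t' → Ftil M σ S (T + t') x v = 0) ∧
    (∀ t' : ℝ, 0 < t' → t' ≤ exitTime M x v →
      Ftil M σ S (T + t') x v
        = (Real.exp (-(∫ u in (0:ℝ)..t', σ (x + u • v) v)) : ℂ) *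
            Ftil M σ S T (x + t' • v) v) :=
  stmt_16_general M T σ hσc S hSsupp x v
end
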